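/- arXiv:0905.1887 — 10 statements merged into one kernel-verified Lean document; each statement's English description precedes it below -/
import Mathlib

section
/- Let V be a vector space, α : V → V a linear map, and B : V⊗V → V⊗V a linear map satisfying the Yang-Baxter equation (id⊗B)∘(B⊗id)∘(id⊗B) = (B⊗id)∘(id⊗B)∘(B⊗id) and commuting with α⊗α. Then the map B_α = (α⊗α)∘B satisfies the Hom-Yang-Baxter equation for (V,α): (α⊗B_α)∘(B_α⊗α)∘(α⊗B_α) = (B_α⊗α)∘(α⊗B_α)∘(B_α⊗α), and B_α commutes with α⊗α. -/
/-!
Inside `End((V ⊗ V) ⊗ V)` put `c = α ⊗ α ⊗ α`. The two operators of the Hom-Yang-Baxter equation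
for `B_α` factor as `B_α ⊗ α = c · (B ⊗ id)` and `α ⊗ B_α = c · (id ⊗ B)`, and `c` commutes with
both `B ⊗ id` and `id ⊗ B` because `α ⊗ α` commutes with `B`. So each side of the equation is `c³`
times the corresponding side of the Yang-Baxter equation for `B`.
-/

open TensorProduct

/-- The operator `α ⊗ B` on `(V ⊗ V) ⊗ V`, obtained by conjugating
`TensorProduct.map α B : V ⊗ (V ⊗ V) → V ⊗ (V ⊗ V)` with the associator. -/
noncomputable def leftTwist {k V : Type*} [CommRing k] [AddCommGroup V] [Module k V]
    (α : V →ₗ[k] V) (B : V ⊗[k] V →ₗ[k] V ⊗[k] V) :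
    (V ⊗[k] V) ⊗[k] V →ₗ[k] (V ⊗[k] V) ⊗[k] V :=
  (TensorProduct.assoc k V V V).symm.toLinearMap ∘ₗ
    TensorProduct.map α B ∘ₗ (TensorProduct.assoc k V V V).toLinearMap

theorem Commute.mul_braid {M : Type*} [Monoid M] {a b c : M} (ha : Commute c a) (hb : Commute c b)
    (hab : a * (b * a) = b * (a * b)) :
    c * a * (c * b * (c * a)) = c * b * (c * a * (c * b)) := by
  have hcube {x y z : M} (hx : Commute c x) (hy : Commute c y) :
      c * x * (c * y * (c * z)) = c * (c * c) * (x * (y * z)) := by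
    rw [hy.symm.mul_mul_mul_comm, (hx.mul_left hx).symm.mul_mul_mul_comm]
  rw [hcube ha hb, hcube hb ha, hab]

namespace TensorProduct

variable {R M N : Type*} [CommRing R] [AddCommGroup M] [Module R M] [AddCommGroup N] [Module R N]

theorem map_commute {f₁ f₂ : Module.End R M} {g₁ g₂ : Module.End R N}
    (hf : Commute f₁ f₂) (hg : Commute g₁ g₂) : Commute (map f₁ g₁) (map f₂ g₂) := by
  rw [commute_iff_eq, ← TensorProduct.map_mul, ← TensorProduct.map_mul, hf.eq, hg.eq]

end TensorProduct

section leftTwist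

variable {k V : Type*} [CommRing k] [AddCommGroup V] [Module k V]

theorem leftTwist_eq_conj (f : Module.End k V) (g : Module.End k (V ⊗[k] V)) :
    leftTwist f g = (TensorProduct.assoc k V V V).symm.conj (map f g) := by
  rw [LinearEquiv.symm_conj_apply]
  rfl

theorem leftTwist_mul (f₁ f₂ : Module.End k V) (g₁ g₂ : Module.End k (V ⊗[k] V)) :
    leftTwist (f₁ * f₂) (g₁ * g₂) = leftTwist f₁ g₁ * leftTwist f₂ g₂ := by
  simp only [leftTwist_eq_conj, Module.End.mul_eq_comp, TensorProduct.map_comp,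
    LinearEquiv.conj_comp]

theorem leftTwist_commute {f₁ f₂ : Module.End k V} {g₁ g₂ : Module.End k (V ⊗[k] V)}
    (hf : Commute f₁ f₂) (hg : Commute g₁ g₂) : Commute (leftTwist f₁ g₁) (leftTwist f₂ g₂) := by
  rw [commute_iff_eq, ← leftTwist_mul, ← leftTwist_mul, hf.eq, hg.eq]

theorem leftTwist_map (f g h : Module.End k V) : leftTwist f (map g h) = map (map f g) h := by
  rw [leftTwist, ← LinearMap.comp_assoc, ← map_map_comp_assoc_symm_eq, LinearMap.comp_assoc,
    LinearEquiv.symm_comp, LinearMap.comp_id]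

end leftTwist

theorem stmt0 {k V : Type*} [Field k] [AddCommGroup V] [Module k V]
    (α : V →ₗ[k] V) (B : V ⊗[k] V →ₗ[k] V ⊗[k] V)
    (hYBE : leftTwist LinearMap.id B ∘ₗ TensorProduct.map B LinearMap.id ∘ₗ
        leftTwist LinearMap.id B
      = TensorProduct.map B LinearMap.id ∘ₗ leftTwist LinearMap.id B ∘ₗ
        TensorProduct.map B LinearMap.id)
    (hcomm : TensorProduct.map α α ∘ₗ B = B ∘ₗ TensorProduct.map α α) :
    (TensorProduct.map α α ∘ₗ (TensorProduct.map α α ∘ₗ B)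
      = (TensorProduct.map α α ∘ₗ B) ∘ₗ TensorProduct.map α α) ∧
    (leftTwist α (TensorProduct.map α α ∘ₗ B) ∘ₗ
        TensorProduct.map (TensorProduct.map α α ∘ₗ B) α ∘ₗ
        leftTwist α (TensorProduct.map α α ∘ₗ B)
      = TensorProduct.map (TensorProduct.map α α ∘ₗ B) α ∘ₗ
        leftTwist α (TensorProduct.map α α ∘ₗ B) ∘ₗ
        TensorProduct.map (TensorProduct.map α α ∘ₗ B) α) := by
  have hαB : Commute (map α α) B := hcomm
  refine ⟨((Commute.refl _).mul_right hαB).eq, ?_⟩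
  have hleft : leftTwist α (map α α ∘ₗ B) = leftTwist α (map α α) * leftTwist 1 B := by
    rw [← leftTwist_mul, mul_one]; rfl
  have hright : map (map α α ∘ₗ B) α = leftTwist α (map α α) * map B 1 := by
    rw [leftTwist_map, ← TensorProduct.map_mul, mul_one]; rfl
  have hc_left : Commute (leftTwist α (map α α)) (leftTwist 1 B) :=
    leftTwist_commute (Commute.one_right α) hαB
  have hc_right : Commute (leftTwist α (map α α)) (map B 1) := by
    rw [leftTwist_map]
    exact map_commute hαB (Commute.one_right α)
  rw [hleft, hright]
  exact hc_left.mul_braid hc_right hYBE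
end

section
/- Let V be an N-dimensional vector space over C with basis {e₁,…,e_N}, N ≥ 2, and let q,λ be nonzero complex scalars with q² ≠ 1. Define B : V⊗V → V⊗V by B(eᵢ⊗eⱼ) = λq eᵢ⊗eᵢ if i=j, λ eⱼ⊗eᵢ if i<j, and λ eⱼ⊗eᵢ + λ(q−q⁻¹) eᵢ⊗eⱼ if i>j. Then a linear map α : V → V with matrix (a_{ij}) satisfies (α⊗α)∘B = B∘(α⊗α) if and only if (1) each column of (a_{ij}) has at most one non-zero entry, and (2) whenever 1 ≤ i < j ≤ N and a_{ki}·a_{lj} ≠ 0, then k < l. -/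
/-!
Compare both sides of `(α ⊗ α) ∘ B = B ∘ (α ⊗ α)` on `e i ⊗ e j` in the basis `e m ⊗ e n`.
With `x = α (e i)`, `y = α (e j)`, the coefficient of `B (x ⊗ y)` at `e m ⊗ e n` is
`(n = m ? λq : λ) xₙ yₘ + (n < m ? λ(q - q⁻¹) : 0) xₘ yₙ`, so commutation is a system of quadratic
equations in the matrix entries of `α`. For `i = j`, `m ≠ n` these equations say that
`λ(q - 1) xₘ xₙ` or `λ(q⁻¹ - 1) xₘ xₙ` vanishes, which is condition (1); for `i < j`, `n ≤ m` they say
that `λ(1 - q) xₘ yₘ` or `λ(q - q⁻¹) xₘ yₙ` vanishes, which is condition (2). Conversely, (1) and (2)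
kill every product on which the two sides differ. Only the three scalars `d = λq`, `s = λ`,
`t = λ(q - q⁻¹)` matter, through `d ≠ s`, `t ≠ 0` and `d ≠ s + t`.
-/

open TensorProduct

namespace Module.Basis

variable {R M N P ι κ ν : Type*} [CommRing R] [AddCommGroup M] [Module R M] [AddCommGroup N]
  [Module R N] [AddCommGroup P] [Module R P]

theorem tensorProduct_repr_tmul_apply_eq_mul (b : Basis ι R M) (c : Basis κ R N) (x : M) (y : N)
    (i : ι) (j : κ) :
    (b.tensorProduct c).repr (x ⊗ₜ y) (i, j) = b.repr x i * c.repr y j := by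
  rw [tensorProduct_repr_tmul_apply, smul_eq_mul, mul_comm]

theorem ext_tensorProduct_repr (b : Basis ι R M) (c : Basis κ R N) (p : Basis ν R P)
    {f g : M ⊗[R] N →ₗ[R] P}
    (h : ∀ i j k, p.repr (f (b i ⊗ₜ c j)) k = p.repr (g (b i ⊗ₜ c j)) k) : f = g :=
  (b.tensorProduct c).ext fun ⟨i, j⟩ ↦ by
    rw [tensorProduct_apply, p.ext_elem_iff]
    exact h i j

end Module.Basis

section

variable {R V ι : Type*} [CommRing R] [AddCommGroup V] [Module R V] [LinearOrder ι]

def IsJimboRMatrix (e : Module.Basis ι R V) (d s t : R) (B : V ⊗[R] V →ₗ[R] V ⊗[R] V) : Prop :=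
  ∀ i j, B (e i ⊗ₜ e j) =
    if i = j then d • (e i ⊗ₜ e i)
    else if i < j then s • (e j ⊗ₜ e i)
    else s • (e j ⊗ₜ e i) + t • (e i ⊗ₜ e j)

namespace IsJimboRMatrix

open Module.Basis (tensorProduct_repr_tmul_apply_eq_mul)

variable {e : Module.Basis ι R V} {d s t : R} {B : V ⊗[R] V →ₗ[R] V ⊗[R] V}

theorem repr_apply_tmul (hB : IsJimboRMatrix e d s t B) (x y : V) (m n : ι) :
    (e.tensorProduct e).repr (B (x ⊗ₜ y)) (m, n) =
      (if n = m then d else s) * (e.repr x n * e.repr y m) +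
        (if n < m then t else 0) * (e.repr x m * e.repr y n) := by
  classical
  have key : (TensorProduct.mk R V V).compr₂ ((e.tensorProduct e).coord (m, n) ∘ₗ B) =
      (if n = m then d else s) • (LinearMap.mul R R).compl₁₂ (e.coord n) (e.coord m) +
        (if n < m then t else 0) • (LinearMap.mul R R).compl₁₂ (e.coord m) (e.coord n) := by
    refine LinearMap.ext_basis e e fun i j ↦ ?_
    simp only [LinearMap.compr₂_apply, mk_apply, LinearMap.comp_apply, hB i j,
      Module.Basis.coord_apply, LinearMap.add_apply, LinearMap.smul_apply,
      LinearMap.compl₁₂_apply, LinearMap.mul_apply', Module.Basis.repr_self, smul_eq_mul]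
    split_ifs <;>
      simp only [tensorProduct_repr_tmul_apply_eq_mul, map_add, map_smul, Finsupp.add_apply,
        Finsupp.smul_apply, Module.Basis.repr_self, Finsupp.single_apply, smul_eq_mul] <;>
      grind
  simpa only [LinearMap.compr₂_apply, mk_apply, LinearMap.comp_apply, Module.Basis.coord_apply,
    LinearMap.add_apply, LinearMap.smul_apply, LinearMap.compl₁₂_apply, LinearMap.mul_apply',
    smul_eq_mul] using congr($key x y)

theorem repr_map_apply_tmul_basis (hB : IsJimboRMatrix e d s t B) (α : V →ₗ[R] V)
    (i j m n : ι) :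
    (e.tensorProduct e).repr (map α α (B (e i ⊗ₜ e j))) (m, n) =
      if i = j then d * (e.repr (α (e i)) m * e.repr (α (e i)) n)
      else if i < j then s * (e.repr (α (e j)) m * e.repr (α (e i)) n)
      else s * (e.repr (α (e j)) m * e.repr (α (e i)) n) +
        t * (e.repr (α (e i)) m * e.repr (α (e j)) n) := by
  rw [hB i j]
  split_ifs <;>
    simp only [map_add, map_smul, map_tmul, Finsupp.add_apply, Finsupp.smul_apply, smul_eq_mul,
      tensorProduct_repr_tmul_apply_eq_mul]

theorem repr_eq_of_commute (hB : IsJimboRMatrix e d s t B) {α : V →ₗ[R] V}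
    (hα : Commute (map α α) B) (i j m n : ι) :
    (if i = j then d * (e.repr (α (e i)) m * e.repr (α (e i)) n)
      else if i < j then s * (e.repr (α (e j)) m * e.repr (α (e i)) n)
      else s * (e.repr (α (e j)) m * e.repr (α (e i)) n) +
        t * (e.repr (α (e i)) m * e.repr (α (e j)) n)) =
      (if n = m then d else s) * (e.repr (α (e i)) n * e.repr (α (e j)) m) +
        (if n < m then t else 0) * (e.repr (α (e i)) m * e.repr (α (e j)) n) := by
  rw [← hB.repr_map_apply_tmul_basis, ← hB.repr_apply_tmul, ← map_tmul]
  exact congr((e.tensorProduct e).repr ($hα.eq (e i ⊗ₜ e j)) (m, n))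

theorem commute_map_of_repr_mul_repr_eq_zero (hB : IsJimboRMatrix e d s t B) {α : V →ₗ[R] V}
    (h₁ : ∀ i m n, m ≠ n → e.repr (α (e i)) m * e.repr (α (e i)) n = 0)
    (h₂ : ∀ i j m n, i < j → n ≤ m → e.repr (α (e i)) m * e.repr (α (e j)) n = 0) :
    Commute (map α α) B := by
  refine Module.Basis.ext_tensorProduct_repr e e (e.tensorProduct e) fun i j ⟨m, n⟩ ↦ ?_
  rw [Module.End.mul_apply, Module.End.mul_apply, hB.repr_map_apply_tmul_basis, map_tmul,
    hB.repr_apply_tmul]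
  rcases lt_trichotomy i j with hij | rfl | hji <;>
    rcases lt_trichotomy n m with hnm | rfl | hnm <;>
    grind

variable [NoZeroDivisors R]

theorem repr_mul_repr_eq_zero_of_commute_of_ne (hB : IsJimboRMatrix e d s t B) (hds : d ≠ s)
    (hdst : d ≠ s + t) {α : V →ₗ[R] V} (hα : Commute (map α α) B) (i : ι) {m n : ι}
    (hmn : m ≠ n) :
    e.repr (α (e i)) m * e.repr (α (e i)) n = 0 := by
  have H := hB.repr_eq_of_commute hα i i m n
  rw [if_pos rfl] at H
  rcases hmn.lt_or_gt with h | h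
  · rw [if_neg h.ne', if_neg h.not_gt] at H
    have : (d - s) * (e.repr (α (e i)) m * e.repr (α (e i)) n) = 0 := by linear_combination H
    exact (mul_eq_zero.1 this).resolve_left (sub_ne_zero.2 hds)
  · rw [if_neg h.ne, if_pos h] at H
    have : (d - (s + t)) * (e.repr (α (e i)) m * e.repr (α (e i)) n) = 0 := by
      linear_combination H
    exact (mul_eq_zero.1 this).resolve_left (sub_ne_zero.2 hdst)

theorem repr_mul_repr_eq_zero_of_commute_of_le (hB : IsJimboRMatrix e d s t B) (hds : d ≠ s)
    (ht : t ≠ 0) {α : V →ₗ[R] V} (hα : Commute (map α α) B) {i j m n : ι} (hij : i < j)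
    (hnm : n ≤ m) :
    e.repr (α (e i)) m * e.repr (α (e j)) n = 0 := by
  have H := hB.repr_eq_of_commute hα i j m n
  rw [if_neg hij.ne, if_pos hij] at H
  rcases hnm.eq_or_lt with rfl | h
  · rw [if_pos rfl, if_neg (lt_irrefl n)] at H
    have : (s - d) * (e.repr (α (e i)) n * e.repr (α (e j)) n) = 0 := by linear_combination H
    exact (mul_eq_zero.1 this).resolve_left (sub_ne_zero.2 hds.symm)
  · rw [if_neg h.ne, if_pos h] at H
    exact (mul_eq_zero.1 (by linear_combination -H)).resolve_left ht

theorem commute_map_iff (hB : IsJimboRMatrix e d s t B) (hds : d ≠ s) (ht : t ≠ 0)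
    (hdst : d ≠ s + t) (α : V →ₗ[R] V) :
    Commute (map α α) B ↔
      (∀ i k l, e.repr (α (e i)) k ≠ 0 → e.repr (α (e i)) l ≠ 0 → k = l) ∧
        (∀ i j k l, i < j → e.repr (α (e i)) k * e.repr (α (e j)) l ≠ 0 → k < l) := by
  refine ⟨fun hα ↦ ⟨fun i k l hk hl ↦ ?_, fun i j k l hij hkl ↦ ?_⟩, fun ⟨h₁, h₂⟩ ↦ ?_⟩
  · by_contra hne
    exact mul_ne_zero hk hl (hB.repr_mul_repr_eq_zero_of_commute_of_ne hds hdst hα i hne)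
  · by_contra hlk
    exact hkl (hB.repr_mul_repr_eq_zero_of_commute_of_le hds ht hα hij (not_lt.1 hlk))
  · refine hB.commute_map_of_repr_mul_repr_eq_zero (fun i m n hmn ↦ ?_) fun i j m n hij hnm ↦ ?_
    · by_contra h
      exact hmn (h₁ i m n (left_ne_zero_of_mul h) (right_ne_zero_of_mul h))
    · by_contra h
      exact hnm.not_gt (h₂ i j m n hij h)

end IsJimboRMatrix

end

theorem stmt2_general {V : Type*} [AddCommGroup V] [Module ℂ V] (N : ℕ)
    (e : Module.Basis (Fin N) ℂ V) (q lam : ℂ) (hq : q ≠ 0) (hq2 : q ^ 2 ≠ 1) (hlam : lam ≠ 0)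
    (B : V ⊗[ℂ] V →ₗ[ℂ] V ⊗[ℂ] V)
    (hB : ∀ i j : Fin N, B (e i ⊗ₜ e j) =
      if i = j then (lam * q) • (e i ⊗ₜ e i)
      else if i < j then lam • (e j ⊗ₜ e i)
      else lam • (e j ⊗ₜ e i) + (lam * (q - q⁻¹)) • (e i ⊗ₜ e j))
    (α : V →ₗ[ℂ] V) :
    (TensorProduct.map α α ∘ₗ B = B ∘ₗ TensorProduct.map α α) ↔
      ((∀ i k l : Fin N, e.repr (α (e i)) k ≠ 0 → e.repr (α (e i)) l ≠ 0 → k = l) ∧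
       (∀ i j k l : Fin N, i < j → e.repr (α (e i)) k * e.repr (α (e j)) l ≠ 0 → k < l)) := by
  have hq1 : q ≠ 1 := by
    rintro rfl
    exact hq2 (one_pow 2)
  have hqq : q - q⁻¹ ≠ 0 := by
    rw [sub_ne_zero]
    intro h
    apply hq2
    rw [sq]
    nth_rw 1 [h]
    exact inv_mul_cancel₀ hq
  have hds : lam * q ≠ lam := by simpa [hlam] using hq1
  have hdst : lam * q ≠ lam + lam * (q - q⁻¹) := by
    intro h
    have : lam * (q⁻¹ - 1) = 0 := by linear_combination h
    exact inv_ne_one.2 hq1 (by simpa [hlam, sub_eq_zero] using this)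
  exact IsJimboRMatrix.commute_map_iff hB hds (mul_ne_zero hlam hqq) hdst α

theorem stmt2 {V : Type*} [AddCommGroup V] [Module ℂ V] (N : ℕ) (hN : 2 ≤ N)
    (e : Module.Basis (Fin N) ℂ V) (q lam : ℂ) (hq : q ≠ 0) (hq2 : q ^ 2 ≠ 1) (hlam : lam ≠ 0)
    (B : V ⊗[ℂ] V →ₗ[ℂ] V ⊗[ℂ] V)
    (hB : ∀ i j : Fin N, B (e i ⊗ₜ e j) =
      if i = j then (lam * q) • (e i ⊗ₜ e i)
      else if i < j then lam • (e j ⊗ₜ e i)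
      else lam • (e j ⊗ₜ e i) + (lam * (q - q⁻¹)) • (e i ⊗ₜ e j))
    (α : V →ₗ[ℂ] V) :
    (TensorProduct.map α α ∘ₗ B = B ∘ₗ TensorProduct.map α α) ↔
      ((∀ i k l : Fin N, e.repr (α (e i)) k ≠ 0 → e.repr (α (e i)) l ≠ 0 → k = l) ∧
       (∀ i j k l : Fin N, i < j → e.repr (α (e i)) k * e.repr (α (e j)) l ≠ 0 → k < l)) :=
  stmt2_general N e q lam hq hq2 hlam B hB α
end

section
/- Let g and h be Lie algebras over a field, α : g → g and β : h → h Lie algebra morphisms with β injective. Then the Hom-Lie algebras g_α = (g, α∘[−,−], α) and h_β = (h, β∘[−,−], β) are isomorphic (i.e., there is a linear isomorphism γ : g → h with γ∘α = β∘γ and γ(α[x,y]) = β[γx,γy] for all x,y) if and only if there exists a Lie algebra isomorphism γ : g → h such that γ∘α = β∘γ. -/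
theorem comp_bracket_eq_iff_map_bracket_eq {L L' : Type*} [Bracket L L] [Bracket L' L']
    {γ : L → L'} {α : L → L} {β : L' → L'} (hβ : Function.Injective β)
    (hγ : ∀ x, γ (α x) = β (γ x)) (x y : L) :
    γ (α ⁅x, y⁆) = β ⁅γ x, γ y⁆ ↔ γ ⁅x, y⁆ = ⁅γ x, γ y⁆ := by
  rw [hγ, hβ.eq_iff]

theorem stmt3_general {k g h : Type*} [Field k]
    [LieRing g] [LieAlgebra k g] [LieRing h] [LieAlgebra k h]
    (α : g →ₗ[k] g) (β : h →ₗ[k] h)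
    (hβinj : Function.Injective β) :
    (∃ γ : g ≃ₗ[k] h, (∀ x, γ (α x) = β (γ x)) ∧
        ∀ x y, γ (α ⁅x, y⁆) = β ⁅γ x, γ y⁆) ↔
    (∃ γ : g ≃ₗ[k] h, (∀ x y, γ ⁅x, y⁆ = ⁅γ x, γ y⁆) ∧
        ∀ x, γ (α x) = β (γ x)) :=
  exists_congr fun _ => (and_congr_right fun hγ =>
    forall₂_congr (comp_bracket_eq_iff_map_bracket_eq hβinj hγ)).trans and_comm

theorem stmt3 {k g h : Type*} [Field k]
    [LieRing g] [LieAlgebra k g] [LieRing h] [LieAlgebra k h]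
    (α : g →ₗ[k] g) (β : h →ₗ[k] h)
    (hα : ∀ x y : g, α ⁅x, y⁆ = ⁅α x, α y⁆)
    (hβ : ∀ x y : h, β ⁅x, y⁆ = ⁅β x, β y⁆)
    (hβinj : Function.Injective β) :
    (∃ γ : g ≃ₗ[k] h, (∀ x, γ (α x) = β (γ x)) ∧
        ∀ x y, γ (α ⁅x, y⁆) = β ⁅γ x, γ y⁆) ↔
    (∃ γ : g ≃ₗ[k] h, (∀ x y, γ ⁅x, y⁆ = ⁅γ x, γ y⁆) ∧
        ∀ x, γ (α x) = β (γ x)) :=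
  stmt3_general α β hβinj
end

section
/- Let g be a Lie algebra and α, β : g → g Lie algebra automorphisms. Then the Hom-Lie algebras g_α = (g, α∘[−,−], α) and g_β = (g, β∘[−,−], β) are isomorphic if and only if α and β are conjugate in the group of Lie algebra automorphisms of g, i.e., there exists a Lie algebra automorphism γ of g with γ∘α = β∘γ. -/
theorem twisted_bracket_hom_iff_bracket_hom {L M : Type*} [Bracket L L] [Bracket M M]
    {α : L → L} {β : M → M} {γ : L → M} (hβ : Function.Injective β)
    (hγ : ∀ x, γ (α x) = β (γ x)) :
    (∀ x y, γ (α ⁅x, y⁆) = β ⁅γ x, γ y⁆) ↔ ∀ x y, γ ⁅x, y⁆ = ⁅γ x, γ y⁆ := by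
  refine forall₂_congr fun x y => ?_
  rw [hγ]
  exact hβ.eq_iff

theorem stmt4_general {k g : Type*} [Field k] [LieRing g] [LieAlgebra k g]
    (α β : g ≃ₗ[k] g) :
    (∃ γ : g ≃ₗ[k] g, (∀ x, γ (α x) = β (γ x)) ∧
        ∀ x y, γ (α ⁅x, y⁆) = β ⁅γ x, γ y⁆) ↔
    (∃ γ : g ≃ₗ[k] g, (∀ x y, γ ⁅x, y⁆ = ⁅γ x, γ y⁆) ∧
        ∀ x, γ (α x) = β (γ x)) := by
  refine exists_congr fun γ => ?_
  rw [and_comm]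
  exact and_congr_left fun hγ => twisted_bracket_hom_iff_bracket_hom β.injective hγ

theorem stmt4 {k g : Type*} [Field k] [LieRing g] [LieAlgebra k g]
    (α β : g ≃ₗ[k] g)
    (hα : ∀ x y : g, α ⁅x, y⁆ = ⁅α x, α y⁆)
    (hβ : ∀ x y : g, β ⁅x, y⁆ = ⁅β x, β y⁆) :
    (∃ γ : g ≃ₗ[k] g, (∀ x, γ (α x) = β (γ x)) ∧
        ∀ x y, γ (α ⁅x, y⁆) = β ⁅γ x, γ y⁆) ↔
    (∃ γ : g ≃ₗ[k] g, (∀ x y, γ ⁅x, y⁆ = ⁅γ x, γ y⁆) ∧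
        ∀ x, γ (α x) = β (γ x)) :=
  stmt4_general α β
end

section
/- Let g be a Lie algebra and α : g → g a Lie algebra morphism. Then the bracket [x,y]_α := α([x,y]) together with α makes g into a Hom-Lie algebra: [−,−]_α is bilinear and skew-symmetric, α is multiplicative with respect to [−,−]_α, and the Hom-Jacobi identity [[x,y]_α, α(z)]_α + [[z,x]_α, α(y)]_α + [[y,z]_α, α(x)]_α = 0 holds for all x,y,z ∈ g. -/
section

variable {L : Type*} [LieRing L]

theorem lie_lie_add_lie_lie_add_lie_lie (x y z : L) :
    ⁅⁅x, y⁆, z⁆ + ⁅⁅z, x⁆, y⁆ + ⁅⁅y, z⁆, x⁆ = 0 := by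
  rw [← lie_skew ⁅x, y⁆ z, ← lie_skew ⁅z, x⁆ y, ← lie_skew ⁅y, z⁆ x, ← neg_eq_zero]
  simpa only [neg_add, neg_neg, add_comm, add_left_comm, add_assoc] using lie_jacobi x y z

theorem hom_jacobi_of_map_lie {F : Type*} [FunLike F L L]
    [AddMonoidHomClass F L L] (α : F) (hα : ∀ x y : L, α ⁅x, y⁆ = ⁅α x, α y⁆) (x y z : L) :
    α ⁅α ⁅x, y⁆, α z⁆ + α ⁅α ⁅z, x⁆, α y⁆ + α ⁅α ⁅y, z⁆, α x⁆ = 0 := by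
  rw [← hα ⁅x, y⁆ z, ← hα ⁅z, x⁆ y, ← hα ⁅y, z⁆ x, ← map_add, ← map_add, ← map_add,
    ← map_add, lie_lie_add_lie_lie_add_lie_lie, map_zero, map_zero]

end

theorem stmt5 {k g : Type*} [Field k] [LieRing g] [LieAlgebra k g]
    (α : g →ₗ[k] g) (hα : ∀ x y : g, α ⁅x, y⁆ = ⁅α x, α y⁆) :
    -- bilinearity of [x,y]_α := α [x,y]
    (∀ x x' y : g, α ⁅x + x', y⁆ = α ⁅x, y⁆ + α ⁅x', y⁆) ∧
    (∀ (c : k) (x y : g), α ⁅c • x, y⁆ = c • α ⁅x, y⁆) ∧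
    (∀ x y y' : g, α ⁅x, y + y'⁆ = α ⁅x, y⁆ + α ⁅x, y'⁆) ∧
    (∀ (c : k) (x y : g), α ⁅x, c • y⁆ = c • α ⁅x, y⁆) ∧
    -- skew-symmetry
    (∀ x y : g, α ⁅x, y⁆ = - α ⁅y, x⁆) ∧
    -- multiplicativity of α with respect to [-,-]_α
    (∀ x y : g, α (α ⁅x, y⁆) = α ⁅α x, α y⁆) ∧
    -- Hom-Jacobi identity
    (∀ x y z : g,
      α ⁅α ⁅x, y⁆, α z⁆ + α ⁅α ⁅z, x⁆, α y⁆ + α ⁅α ⁅y, z⁆, α x⁆ = 0) := by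
  refine ⟨fun x x' y => by rw [add_lie, map_add], fun c x y => by rw [smul_lie, map_smul],
    fun x y y' => by rw [lie_add, map_add], fun c x y => by rw [lie_smul, map_smul],
    fun x y => by rw [← lie_skew, map_neg], fun x y => by rw [hα],
    hom_jacobi_of_map_lie α hα⟩
end

section
/- Let L = span_C{X,Y,Z} be the Lie algebra with bracket determined by [Y,Z]=0, [Y,X]=(1/2)Y, [Z,X]=(1/2)Z (the linear dual of sl(2), isomorphic to the (1+1)-Poincaré algebra). A linear map α : L → L is a Lie algebra morphism if and only if its matrix with respect to {X,Y,Z} has one of the two forms: α₁ = [[1,0,0],[a_{21},a_{22},a_{23}],[a_{31},a_{32},a_{33}]], or α₂ = [[a_{11},0,0],[a_{21},0,0],[a_{31},0,0]] with a_{11} ≠ 1. -/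
/-! With `φ` half the `X`-coordinate, the bracket of `L` is `⁅u, v⁆ = φ v • u - φ u • v`, so `φ`
kills all brackets. For a morphism `α`, `k ∈ ker φ` and `x` with `φ x ≠ 0`, comparing
`α ⁅k, x⁆ = φ x • α k` with `⁅α k, α x⁆ = φ (α x) • α k` gives `(φ x - φ (α x)) • α k = 0`: either
`φ ∘ α` agrees with `φ` on `x` and on `ker φ`, hence everywhere, or `α` kills `ker φ = span {Y, Z}`.
Conversely, `φ ∘ α = φ` makes `α` respect the bracket formula, while a map killing `ker φ` has rank
at most one, so both sides of `α ⁅u, v⁆ = ⁅α u, α v⁆` vanish. -/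

section LinearFunctional

variable {K M : Type*} [Field K] [AddCommGroup M] [Module K M]

theorem LinearMap.apply_smul_sub_smul_eq_zero (φ : M →ₗ[K] K) (x u : M) :
    φ (φ x • u - φ u • x) = 0 := by
  simp [mul_comm]

theorem LinearMap.eq_of_ker_le_ker_of_apply_eq {φ ψ : M →ₗ[K] K} {x : M} (hx : φ x ≠ 0)
    (hker : LinearMap.ker φ ≤ LinearMap.ker ψ) (hψx : ψ x = φ x) : ψ = φ := by
  ext u
  have hu := hker (φ.apply_smul_sub_smul_eq_zero x u)
  simp only [LinearMap.mem_ker, map_sub, map_smul, smul_eq_mul, hψx] at hu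
  exact mul_left_cancel₀ hx (by linear_combination hu)

end LinearFunctional

section BracketOfFunctional

variable {K L : Type*} [Field K] [LieRing L] [LieAlgebra K L] {φ : L →ₗ[K] K}
  (hφ : ∀ u v : L, ⁅u, v⁆ = φ v • u - φ u • v)
include hφ

theorem apply_lie_eq_zero_of_lie_eq (u v : L) : φ ⁅u, v⁆ = 0 := by
  rw [hφ]
  exact φ.apply_smul_sub_smul_eq_zero v u

theorem map_lie_of_comp_eq {α : L →ₗ[K] L} (hα : φ ∘ₗ α = φ) (u v : L) :
    α ⁅u, v⁆ = ⁅α u, α v⁆ := by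
  rw [hφ, hφ, map_sub, map_smul, map_smul, ← φ.comp_apply α u, ← φ.comp_apply α v, hα]

theorem map_lie_of_ker_le {α : L →ₗ[K] L} {x : L} (hx : φ x ≠ 0)
    (hα : LinearMap.ker φ ≤ LinearMap.ker α) (u v : L) : α ⁅u, v⁆ = ⁅α u, α v⁆ := by
  have hαu : ∀ u, φ x • α u = φ u • α x := fun u => by
    simpa [sub_eq_zero] using hα (φ.apply_smul_sub_smul_eq_zero x u)
  have hlhs : α ⁅u, v⁆ = 0 := hα (apply_lie_eq_zero_of_lie_eq hφ u v)
  have hrhs : ⁅α u, α v⁆ = 0 := by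
    rw [← smul_right_inj (mul_ne_zero hx hx), mul_smul, ← lie_smul, ← smul_lie, hαu, hαu]
    simp
  rw [hlhs, hrhs]

theorem comp_eq_or_ker_le_of_map_lie {α : L →ₗ[K] L} {x : L} (hx : φ x ≠ 0)
    (hα : ∀ u v : L, α ⁅u, v⁆ = ⁅α u, α v⁆) :
    φ ∘ₗ α = φ ∨ LinearMap.ker φ ≤ LinearMap.ker α := by
  have hφα : ∀ k, φ k = 0 → φ (α k) = 0 := fun k hk => by
    have h := congrArg φ (hα k x)
    simp only [apply_lie_eq_zero_of_lie_eq hφ, hφ k x, hk, zero_smul, sub_zero, map_smul,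
      smul_eq_mul, mul_eq_zero] at h
    exact h.resolve_left hx
  have hαk : ∀ k, φ k = 0 → (φ x - φ (α x)) • α k = 0 := fun k hk => by
    have h := hα k x
    rw [hφ, hφ, hk, hφα k hk] at h
    simpa [sub_smul, sub_eq_zero] using h
  by_cases hxx : φ (α x) = φ x
  · exact Or.inl (LinearMap.eq_of_ker_le_ker_of_apply_eq hx hφα hxx)
  · exact Or.inr fun k hk =>
      (smul_eq_zero.mp (hαk k hk)).resolve_left (sub_ne_zero.mpr (Ne.symm hxx))

theorem map_lie_iff_comp_eq_or_ker_le (hφ0 : φ ≠ 0) (α : L →ₗ[K] L) :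
    (∀ u v : L, α ⁅u, v⁆ = ⁅α u, α v⁆) ↔ φ ∘ₗ α = φ ∨ LinearMap.ker φ ≤ LinearMap.ker α := by
  obtain ⟨x, hx⟩ : ∃ x, φ x ≠ 0 := by simpa [LinearMap.ext_iff] using hφ0
  refine ⟨comp_eq_or_ker_le_of_map_lie hφ hx, ?_⟩
  rintro (hcomp | hker)
  · exact map_lie_of_comp_eq hφ hcomp
  · exact map_lie_of_ker_le hφ hx hker

end BracketOfFunctional

section Basis

variable {K L : Type*} [Field K] [LieRing L] [LieAlgebra K L] (b : Module.Basis (Fin 3) K L)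

theorem lie_eq_of_basis (hYZ : ⁅b 1, b 2⁆ = 0) (hYX : ⁅b 1, b 0⁆ = (1 / 2 : K) • b 1)
    (hZX : ⁅b 2, b 0⁆ = (1 / 2 : K) • b 2) (u v : L) :
    ⁅u, v⁆ = ((1 / 2 : K) • b.coord 0) v • u - ((1 / 2 : K) • b.coord 0) u • v := by
  rw [← b.sum_repr u, ← b.sum_repr v]
  simp only [Fin.sum_univ_three, add_lie, lie_add, smul_lie, lie_smul, lie_self, hYZ, hYX, hZX,
    ← lie_skew (b 0) (b 1), ← lie_skew (b 0) (b 2), ← lie_skew (b 2) (b 1), map_add, map_smul,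
    LinearMap.smul_apply, Module.Basis.coord_apply, Module.Basis.repr_self, smul_eq_mul,
    Finsupp.single_apply, Fin.reduceEq, if_true, if_false]
  module

theorem coord_comp_eq_coord_iff (α : L →ₗ[K] L) :
    b.coord 0 ∘ₗ α = b.coord 0 ↔
      b.repr (α (b 0)) 0 = 1 ∧ b.repr (α (b 1)) 0 = 0 ∧ b.repr (α (b 2)) 0 = 0 := by
  rw [← show (∀ i, (b.coord 0 ∘ₗ α) (b i) = b.coord 0 (b i)) ↔ _ from
    ⟨b.ext, fun h i => LinearMap.congr_fun h (b i)⟩]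
  simp [Fin.forall_fin_succ]

theorem ker_coord_le_ker_iff (α : L →ₗ[K] L) :
    LinearMap.ker (b.coord 0) ≤ LinearMap.ker α ↔ α (b 1) = 0 ∧ α (b 2) = 0 := by
  refine ⟨fun h => ⟨h (by simp), h (by simp)⟩, ?_⟩
  rintro ⟨h1, h2⟩ u (hu : b.repr u 0 = 0)
  rw [LinearMap.mem_ker, ← b.sum_repr u]
  simp only [Fin.sum_univ_three, map_add, map_smul, hu, h1, h2, zero_smul, smul_zero, add_zero,
    map_zero]

end Basis

theorem stmt9 {L : Type*} [LieRing L] [LieAlgebra ℂ L]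
    (b : Module.Basis (Fin 3) ℂ L)
    (hYZ : ⁅b 1, b 2⁆ = 0)
    (hYX : ⁅b 1, b 0⁆ = (1 / 2 : ℂ) • b 1)
    (hZX : ⁅b 2, b 0⁆ = (1 / 2 : ℂ) • b 2)
    (α : L →ₗ[ℂ] L) :
    (∀ u v : L, α ⁅u, v⁆ = ⁅α u, α v⁆) ↔
      ((b.repr (α (b 0)) 0 = 1 ∧ b.repr (α (b 1)) 0 = 0 ∧ b.repr (α (b 2)) 0 = 0) ∨
       (α (b 1) = 0 ∧ α (b 2) = 0 ∧ b.repr (α (b 0)) 0 ≠ 1)) := by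
  have hφ0 : (1 / 2 : ℂ) • b.coord 0 ≠ 0 := fun h => by simpa using LinearMap.congr_fun h (b 0)
  rw [map_lie_iff_comp_eq_or_ker_le (lie_eq_of_basis b hYZ hYX hZX) hφ0, LinearMap.smul_comp,
    (smul_right_injective _ (by norm_num)).eq_iff, LinearMap.ker_smul _ _ (by norm_num),
    coord_comp_eq_coord_iff, ker_coord_le_ker_iff]
  by_cases h0 : b.repr (α (b 0)) 0 = 1 <;> aesop
end

section
/- Let sl(2) = span_C{X,Y,Z} with brackets [X,Y]=2Y, [X,Z]=−2Z, [Y,Z]=X, and let α : sl(2) → sl(2) be a linear map with matrix (a_{ij}) with respect to {X,Y,Z}. If α is a Lie algebra morphism with a_{12} = a_{13} = 0, then either α = 0, or α has matrix [[1,0,0],[0,a_{22},0],[0,0,a_{22}⁻¹]] with a_{22} ≠ 0, or α has matrix [[−1,0,0],[0,0,a_{32}⁻¹],[0,a_{32},0]] with a_{32} ≠ 0. -/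
/-!
Write `u, v, w` for the coordinate vectors of `α X, α Y, α Z` with respect to `(X, Y, Z)`, so that
`v 0 = w 0 = 0`. Since `⁅span {Y, Z}, span {Y, Z}⁆ ⊆ span {X}`, the relation `⁅α Y, α Z⁆ = α X`
forces `α X = a • X` with `a = v 1 * w 2 - v 2 * w 1`. As `ad X` acts on `Y, Z` by `2, -2`, the
relations `⁅α X, α Y⁆ = 2 • α Y` and `⁅α X, α Z⁆ = -2 • α Z` say that `v 1, w 2` vanish unless
`a = 1` and that `v 2, w 1` vanish unless `a = -1`. The cases `a = 1`, `a = -1` and otherwise give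
the three alternatives.
-/

open Module

section CommRing

variable {R : Type*} [CommRing R]

def sl2Bracket (x y : Fin 3 → R) : Fin 3 → R :=
  ![x 1 * y 2 - x 2 * y 1, 2 * (x 0 * y 1 - x 1 * y 0), 2 * (x 2 * y 0 - x 0 * y 2)]

theorem Module.Basis.repr_lie_eq_sl2Bracket {L : Type*} [LieRing L] [LieAlgebra R L]
    (b : Basis (Fin 3) R L) (hXY : ⁅b 0, b 1⁆ = (2 : R) • b 1)
    (hXZ : ⁅b 0, b 2⁆ = (-2 : R) • b 2) (hYZ : ⁅b 1, b 2⁆ = b 0) (x y : L) :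
    ⇑(b.repr ⁅x, y⁆) = sl2Bracket ⇑(b.repr x) ⇑(b.repr y) := by
  have hYX : ⁅b 1, b 0⁆ = -((2 : R) • b 1) := by rw [← lie_skew, hXY]
  have hZX : ⁅b 2, b 0⁆ = -((-2 : R) • b 2) := by rw [← lie_skew, hXZ]
  have hZY : ⁅b 2, b 1⁆ = -b 0 := by rw [← lie_skew, hYZ]
  conv_lhs => rw [← b.sum_repr x, ← b.sum_repr y]
  simp only [Fin.sum_univ_three, lie_add, add_lie, lie_smul, smul_lie, lie_self, hXY, hXZ, hYZ,
    hYX, hZX, hZY, smul_zero, smul_neg, smul_smul]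
  ext i
  fin_cases i <;> simp [sl2Bracket] <;> ring

theorem sl2Bracket_of_apply_zero_eq_zero {v w : Fin 3 → R} (hv : v 0 = 0) (hw : w 0 = 0) :
    sl2Bracket v w = ![v 1 * w 2 - v 2 * w 1, 0, 0] := by
  ext i; fin_cases i <;> simp [sl2Bracket, hv, hw]

theorem sl2Bracket_vecCons_zero_zero (a : R) (v : Fin 3 → R) :
    sl2Bracket ![a, 0, 0] v = ![0, 2 * a * v 1, -(2 * a * v 2)] := by
  ext i; fin_cases i <;> simp [sl2Bracket] <;> ring

end CommRing

theorem sl2Bracket_triple_trichotomy {K : Type*} [Field K] [NeZero (2 : K)]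
    {u v w : Fin 3 → K} (hv : v 0 = 0) (hw : w 0 = 0)
    (huv : sl2Bracket u v = (2 : K) • v) (huw : sl2Bracket u w = (-2 : K) • w)
    (hvw : sl2Bracket v w = u) :
    (u = 0 ∧ v = 0 ∧ w = 0) ∨
    (∃ t : K, t ≠ 0 ∧ u = ![1, 0, 0] ∧ v = ![0, t, 0] ∧ w = ![0, 0, t⁻¹]) ∨
    (∃ s : K, s ≠ 0 ∧ u = ![-1, 0, 0] ∧ v = ![0, 0, s] ∧ w = ![0, s⁻¹, 0]) := by
  rw [sl2Bracket_of_apply_zero_eq_zero hv hw] at hvw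
  subst hvw
  set a := v 1 * w 2 - v 2 * w 1 with ha
  rw [sl2Bracket_vecCons_zero_zero] at huv huw
  have hv1 := congrFun huv 1
  have hv2 := congrFun huv 2
  have hw1 := congrFun huw 1
  have hw2 := congrFun huw 2
  simp only [Matrix.cons_val, Pi.smul_apply, smul_eq_mul] at hv1 hv2 hw1 hw2
  have cancel_two {x : K} (h : 2 * x = 0) : x = 0 := (mul_eq_zero.1 h).resolve_left two_ne_zero
  by_cases h1 : a = 1
  · have hv2' : v 2 = 0 := cancel_two (cancel_two (by linear_combination -hv2 - 2 * v 2 * h1))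
    have hw1' : w 1 = 0 := cancel_two (cancel_two (by linear_combination hw1 - 2 * w 1 * h1))
    have hprod : v 1 * w 2 = 1 := by linear_combination h1 - ha + w 1 * hv2'
    refine .inr (.inl ⟨v 1, left_ne_zero_of_mul_eq_one hprod, by rw [h1], ?_, ?_⟩)
    · ext i; fin_cases i <;> simp [hv, hv2']
    · ext i; fin_cases i <;> simp [hw, hw1', eq_inv_of_mul_eq_one_right hprod]
  by_cases hm1 : a = -1
  · have hv1' : v 1 = 0 := cancel_two (cancel_two (by linear_combination -hv1 + 2 * v 1 * hm1))
    have hw2' : w 2 = 0 := cancel_two (cancel_two (by linear_combination hw2 + 2 * w 2 * hm1))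
    have hprod : v 2 * w 1 = 1 := by linear_combination ha - hm1 + w 2 * hv1'
    refine .inr (.inr ⟨v 2, left_ne_zero_of_mul_eq_one hprod, by rw [hm1], ?_, ?_⟩)
    · ext i; fin_cases i <;> simp [hv, hv1']
    · ext i; fin_cases i <;> simp [hw, hw2', eq_inv_of_mul_eq_one_right hprod]
  have ha1 : a - 1 ≠ 0 := sub_ne_zero.2 h1
  have ha1' : a + 1 ≠ 0 := fun h => hm1 (eq_neg_of_add_eq_zero_left h)
  have hv1' : v 1 = 0 := (mul_eq_zero.1 (cancel_two (by linear_combination hv1))).resolve_left ha1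
  have hv2' : v 2 = 0 := (mul_eq_zero.1 (cancel_two (by linear_combination -hv2))).resolve_left ha1'
  have hw1' : w 1 = 0 := (mul_eq_zero.1 (cancel_two (by linear_combination hw1))).resolve_left ha1'
  have hw2' : w 2 = 0 := (mul_eq_zero.1 (cancel_two (by linear_combination -hw2))).resolve_left ha1
  refine .inl ⟨?_, ?_, ?_⟩
  · rw [ha, hv1', hv2']; ext i; fin_cases i <;> simp
  · ext i; fin_cases i <;> simp [hv, hv1', hv2']
  · ext i; fin_cases i <;> simp [hw, hw1', hw2']

theorem stmt11 {L : Type*} [LieRing L] [LieAlgebra ℂ L]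
    (b : Module.Basis (Fin 3) ℂ L)
    (hXY : ⁅b 0, b 1⁆ = (2 : ℂ) • b 1)
    (hXZ : ⁅b 0, b 2⁆ = (-2 : ℂ) • b 2)
    (hYZ : ⁅b 1, b 2⁆ = b 0)
    (α : L →ₗ[ℂ] L) (hα : ∀ u v : L, α ⁅u, v⁆ = ⁅α u, α v⁆)
    (h12 : b.repr (α (b 1)) 0 = 0) (h13 : b.repr (α (b 2)) 0 = 0) :
    α = 0 ∨
    (∃ t : ℂ, t ≠ 0 ∧ α (b 0) = b 0 ∧ α (b 1) = t • b 1 ∧ α (b 2) = t⁻¹ • b 2) ∨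
    (∃ s : ℂ, s ≠ 0 ∧ α (b 0) = -b 0 ∧ α (b 1) = s • b 2 ∧ α (b 2) = s⁻¹ • b 1) := by
  have hom (x y : L) :
      sl2Bracket ⇑(b.repr (α x)) ⇑(b.repr (α y)) = ⇑(b.repr (α ⁅x, y⁆)) := by
    rw [hα, b.repr_lie_eq_sl2Bracket hXY hXZ hYZ]
  have hXY' := hom (b 0) (b 1)
  have hXZ' := hom (b 0) (b 2)
  have hYZ' := hom (b 1) (b 2)
  rw [hXY, map_smul, map_smul] at hXY'
  rw [hXZ, map_smul, map_smul] at hXZ'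
  rw [hYZ] at hYZ'
  have eq_of_repr {x : L} {c : Fin 3 → ℂ} (h : ⇑(b.repr x) = c) : x = ∑ i, c i • b i := by
    rw [← h, b.sum_repr]
  rcases sl2Bracket_triple_trichotomy h12 h13 hXY' hXZ' hYZ' with
    ⟨h0, h1, h2⟩ | ⟨t, ht, h0, h1, h2⟩ | ⟨s, hs, h0, h1, h2⟩
  · refine .inl (b.ext fun i => ?_)
    fin_cases i <;> simp [eq_of_repr h0, eq_of_repr h1, eq_of_repr h2]
  · refine .inr (.inl ⟨t, ht, ?_, ?_, ?_⟩) <;>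
      simp [eq_of_repr h0, eq_of_repr h1, eq_of_repr h2, Fin.sum_univ_three]
  · refine .inr (.inr ⟨s, hs, ?_, ?_, ?_⟩) <;>
      simp [eq_of_repr h0, eq_of_repr h1, eq_of_repr h2, Fin.sum_univ_three]
end

section
/- Let B : V⊗V → V⊗V be a solution of the Hom-Yang-Baxter equation for (V,α), i.e., B commutes with α⊗α and (α⊗B)∘(B⊗α)∘(α⊗B) = (B⊗α)∘(α⊗B)∘(B⊗α). For n ≥ 3 and 1 ≤ i ≤ n−1 define Bᵢ : V^{⊗n} → V^{⊗n} by Bᵢ = α^{⊗(i−1)} ⊗ B ⊗ α^{⊗(n−i−1)}. Then the operators Bᵢ satisfy the braid relations: BᵢBⱼ = BⱼBᵢ whenever |i−j| > 1, and BᵢB_{i+1}Bᵢ = B_{i+1}BᵢB_{i+1} for 1 ≤ i ≤ n−2. -/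
open CategoryTheory MonoidalCategory

/-!
Definitionally, `Bop α B (i + 1) (n + 1) = α ⊗ₘ Bop α B i n` and `Bop α B 0 (n + 1)` is the
associator conjugate `(α_ M M (T M n)).conj (B ⊗ₘ apow α n)`, so by induction on the index both
relations reduce to the case where the first operator is `B₀`. Since conjugation by an isomorphism
is multiplicative, `B₀` commutes with `α ⊗ α ⊗ Bⱼ` because `B` commutes with `α ⊗ α` and each `Bⱼ`
commutes with `α^{⊗}`. On `M ⊗ M ⊗ M ⊗ X` the pentagon identity exhibits `B₀` and `B₁` as the same
reassociation of `(B ⊗ α) ⊗ α^{⊗}` and `(α ⊗ B) ⊗ α^{⊗}`, so `B₀ B₁ B₀ = B₁ B₀ B₁` is the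
Hom-Yang-Baxter equation tensored with `α^{⊗}`.
-/

/-- Iterated tensor power: `T M n` is `M^{⊗(n+1)}`. -/
noncomputable def T {k : Type*} [CommRing k] (M : ModuleCat k) : ℕ → ModuleCat k
  | 0 => M
  | n + 1 => M ⊗ T M n

/-- `α^{⊗(n+1)}` on `T M n`. -/
noncomputable def apow {k : Type*} [CommRing k] {M : ModuleCat k} (α : M ⟶ M) :
    ∀ n, T M n ⟶ T M n
  | 0 => α
  | n + 1 => α ⊗ₘ apow α n

/-- The operator `Bᵢ = α^{⊗ i} ⊗ B ⊗ α^{⊗ (n-1-i)}` on `T M (n+1) = M^{⊗(n+2)}`,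
acting by `B` on the tensor factors in (0-indexed) positions `i` and `i+1`
(and by junk for out-of-range `i`). -/
noncomputable def Bop {k : Type*} [CommRing k] {M : ModuleCat k}
    (α : M ⟶ M) (B : M ⊗ M ⟶ M ⊗ M) : ∀ (i n : ℕ), T M (n + 1) ⟶ T M (n + 1)
  | 0, 0 => B
  | 0, n + 1 => (α_ M M (T M n)).inv ≫ (B ⊗ₘ apow α n) ≫ (α_ M M (T M n)).hom
  | _ + 1, 0 => 𝟙 _
  | i + 1, n + 1 => α ⊗ₘ Bop α B i n

namespace CategoryTheory.MonoidalCategory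

variable {C : Type*} [Category C] [MonoidalCategory C]

def IsHomYangBaxter {X : C} (a : X ⟶ X) (b : X ⊗ X ⟶ X ⊗ X) : Prop :=
  ((α_ X X X).hom ≫ (a ⊗ₘ b) ≫ (α_ X X X).inv) ≫ (b ⊗ₘ a) ≫
      ((α_ X X X).hom ≫ (a ⊗ₘ b) ≫ (α_ X X X).inv)
    = (b ⊗ₘ a) ≫ ((α_ X X X).hom ≫ (a ⊗ₘ b) ≫ (α_ X X X).inv) ≫ (b ⊗ₘ a)

lemma associator_conj_tensorHom {X Y Z : C} (f : X ⟶ X) (g : Y ⟶ Y) (h : Z ⟶ Z) :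
    (α_ X Y Z).conj ((f ⊗ₘ g) ⊗ₘ h) = f ⊗ₘ (g ⊗ₘ h) := by
  rw [Iso.conj_apply, associator_naturality, Iso.inv_hom_id_assoc]

lemma whiskerLeftIso_conj_tensorHom {X Y Y' : C} (i : Y ≅ Y') (f : X ⟶ X) (g : Y ⟶ Y) :
    (whiskerLeftIso X i).conj (f ⊗ₘ g) = f ⊗ₘ i.conj g := by
  simp [Iso.conj_apply, ← id_tensorHom, tensorHom_comp_tensorHom]

lemma whiskerRightIso_conj_tensorHom {X X' Y : C} (i : X ≅ X') (f : X ⟶ X) (g : Y ⟶ Y) :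
    (whiskerRightIso i Y).conj (f ⊗ₘ g) = i.conj f ⊗ₘ g := by
  simp [Iso.conj_apply, ← tensorHom_id, tensorHom_comp_tensorHom]

lemma pentagon_iso (W X Y Z : C) :
    whiskerRightIso (α_ W X Y) Z ≪≫ α_ W (X ⊗ Y) Z ≪≫ whiskerLeftIso W (α_ X Y Z)
      = α_ (W ⊗ X) Y Z ≪≫ α_ W X (Y ⊗ Z) := by
  ext; simp

lemma tensorHom_comp_tensorHom_comm {X Y : C} (a : X ⟶ X) {f g : Y ⟶ Y} (h : f ≫ g = g ≫ f) :
    (a ⊗ₘ f) ≫ (a ⊗ₘ g) = (a ⊗ₘ g) ≫ (a ⊗ₘ f) := by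
  rw [tensorHom_comp_tensorHom, tensorHom_comp_tensorHom, h]

lemma tensorHom_braid {X Y : C} (a : X ⟶ X) {f g : Y ⟶ Y} (h : f ≫ g ≫ f = g ≫ f ≫ g) :
    (a ⊗ₘ f) ≫ (a ⊗ₘ g) ≫ (a ⊗ₘ f) = (a ⊗ₘ g) ≫ (a ⊗ₘ f) ≫ (a ⊗ₘ g) := by
  simp only [tensorHom_comp_tensorHom, h]

lemma conj_tensorHom_comm {X Y : C} {a : X ⟶ X} {b : X ⊗ X ⟶ X ⊗ X} {c d : Y ⟶ Y}
    (hb : b ≫ (a ⊗ₘ a) = (a ⊗ₘ a) ≫ b) (hcd : c ≫ d = d ≫ c) :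
    (α_ X X Y).conj (b ⊗ₘ c) ≫ (a ⊗ₘ (a ⊗ₘ d)) = (a ⊗ₘ (a ⊗ₘ d)) ≫ (α_ X X Y).conj (b ⊗ₘ c) := by
  rw [← associator_conj_tensorHom, ← Iso.conj_comp, ← Iso.conj_comp, tensorHom_comp_tensorHom,
    tensorHom_comp_tensorHom, hb, hcd]

lemma IsHomYangBaxter.braid {X : C} {a : X ⟶ X} {b : X ⊗ X ⟶ X ⊗ X} (h : IsHomYangBaxter a b) :
    (α_ X X X).conj (b ⊗ₘ a) ≫ (a ⊗ₘ b) ≫ (α_ X X X).conj (b ⊗ₘ a)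
      = (a ⊗ₘ b) ≫ (α_ X X X).conj (b ⊗ₘ a) ≫ (a ⊗ₘ b) := by
  have hab : (α_ X X X).conj ((α_ X X X).hom ≫ (a ⊗ₘ b) ≫ (α_ X X X).inv) = a ⊗ₘ b :=
    (α_ X X X).self_symm_conj (a ⊗ₘ b)
  simpa only [Iso.conj_comp, hab] using (congrArg (α_ X X X).conj h).symm

lemma IsHomYangBaxter.braid_tensorHom {X Y : C} {a : X ⟶ X} {b : X ⊗ X ⟶ X ⊗ X}
    (h : IsHomYangBaxter a b) (c : Y ⟶ Y) :
    (α_ X X (X ⊗ Y)).conj (b ⊗ₘ (a ⊗ₘ c)) ≫ (a ⊗ₘ (α_ X X Y).conj (b ⊗ₘ c)) ≫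
        (α_ X X (X ⊗ Y)).conj (b ⊗ₘ (a ⊗ₘ c))
      = (a ⊗ₘ (α_ X X Y).conj (b ⊗ₘ c)) ≫ (α_ X X (X ⊗ Y)).conj (b ⊗ₘ (a ⊗ₘ c)) ≫
        (a ⊗ₘ (α_ X X Y).conj (b ⊗ₘ c)) := by
  set φ := α_ X (X ⊗ X) Y ≪≫ whiskerLeftIso X (α_ X X Y)
  have h₀ : (α_ X X (X ⊗ Y)).conj (b ⊗ₘ (a ⊗ₘ c)) = φ.conj ((α_ X X X).conj (b ⊗ₘ a) ⊗ₘ c) := by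
    rw [← whiskerRightIso_conj_tensorHom, ← Iso.trans_conj, pentagon_iso, Iso.trans_conj,
      associator_conj_tensorHom]
  have h₁ : a ⊗ₘ (α_ X X Y).conj (b ⊗ₘ c) = φ.conj ((a ⊗ₘ b) ⊗ₘ c) := by
    rw [Iso.trans_conj, associator_conj_tensorHom, whiskerLeftIso_conj_tensorHom]
  rw [h₀, h₁, ← Iso.conj_comp, ← Iso.conj_comp, ← Iso.conj_comp, ← Iso.conj_comp,
    tensorHom_comp_tensorHom, tensorHom_comp_tensorHom, tensorHom_comp_tensorHom,
    tensorHom_comp_tensorHom, h.braid]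

end CategoryTheory.MonoidalCategory

section Bop

variable {k : Type*} [CommRing k] {M : ModuleCat k} (α : M ⟶ M) (B : M ⊗ M ⟶ M ⊗ M)

lemma Bop_comp_apow (hcomm : B ≫ (α ⊗ₘ α) = (α ⊗ₘ α) ≫ B) (i n : ℕ) :
    Bop α B i n ≫ apow α (n + 1) = apow α (n + 1) ≫ Bop α B i n := by
  induction i generalizing n with
  | zero =>
    cases n with
    | zero => exact hcomm
    | succ n => exact conj_tensorHom_comm hcomm rfl
  | succ i ih =>
    cases n with
    | zero => simp [Bop]
    | succ n => exact tensorHom_comp_tensorHom_comm α (ih n)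

lemma Bop_comm_of_add_two_le (hcomm : B ≫ (α ⊗ₘ α) = (α ⊗ₘ α) ≫ B) {i j n : ℕ}
    (hij : i + 2 ≤ j) (hjn : j ≤ n) :
    Bop α B i n ≫ Bop α B j n = Bop α B j n ≫ Bop α B i n := by
  induction i generalizing j n with
  | zero =>
    obtain ⟨j, rfl⟩ : ∃ j', j = j' + 2 := ⟨j - 2, by omega⟩
    obtain ⟨n, rfl⟩ : ∃ n', n = n' + 2 := ⟨n - 2, by omega⟩
    exact conj_tensorHom_comm hcomm (Bop_comp_apow α B hcomm j n).symm
  | succ i ih =>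
    obtain ⟨j, rfl⟩ : ∃ j', j = j' + 1 := ⟨j - 1, by omega⟩
    obtain ⟨n, rfl⟩ : ∃ n', n = n' + 1 := ⟨n - 1, by omega⟩
    exact tensorHom_comp_tensorHom_comm α (ih (by omega) (by omega))

lemma Bop_braid (hybe : IsHomYangBaxter α B) {i n : ℕ} (hin : i + 1 ≤ n) :
    Bop α B i n ≫ Bop α B (i + 1) n ≫ Bop α B i n
      = Bop α B (i + 1) n ≫ Bop α B i n ≫ Bop α B (i + 1) n := by
  induction i generalizing n with
  | zero =>
    obtain ⟨n, rfl⟩ : ∃ n', n = n' + 1 := ⟨n - 1, by omega⟩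
    cases n with
    | zero => exact hybe.braid
    | succ n => exact hybe.braid_tensorHom (apow α n)
  | succ i ih =>
    obtain ⟨n, rfl⟩ : ∃ n', n = n' + 1 := ⟨n - 1, by omega⟩
    exact tensorHom_braid α (ih (by omega))

end Bop

theorem stmt15_general {k : Type*} [Field k] (M : ModuleCat k)
    (α : M ⟶ M) (B : M ⊗ M ⟶ M ⊗ M)
    -- B commutes with α ⊗ α
    (hcomm : B ≫ (α ⊗ₘ α) = (α ⊗ₘ α) ≫ B)
    -- the Hom-Yang-Baxter equation for (M, α)
    (hybe : ((α_ M M M).hom ≫ (α ⊗ₘ B) ≫ (α_ M M M).inv) ≫ (B ⊗ₘ α) ≫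
        ((α_ M M M).hom ≫ (α ⊗ₘ B) ≫ (α_ M M M).inv)
      = (B ⊗ₘ α) ≫ ((α_ M M M).hom ≫ (α ⊗ₘ B) ≫ (α_ M M M).inv) ≫ (B ⊗ₘ α))
    (n : ℕ) :
    -- the operators B₁, ..., B_{n-1} (here 0-indexed: `Bop α B i (n-2)` for
    -- `i = 0, ..., n-2`) on `M^{⊗ n} = T M (n-1)` satisfy the braid relations
    (∀ i j : ℕ, i < n - 1 → j < n - 1 → (i + 1 < j ∨ j + 1 < i) →
      Bop α B i (n - 2) ≫ Bop α B j (n - 2)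
        = Bop α B j (n - 2) ≫ Bop α B i (n - 2)) ∧
    (∀ i : ℕ, i + 1 < n - 1 →
      Bop α B i (n - 2) ≫ Bop α B (i + 1) (n - 2) ≫ Bop α B i (n - 2)
        = Bop α B (i + 1) (n - 2) ≫ Bop α B i (n - 2) ≫ Bop α B (i + 1) (n - 2)) := by
  refine ⟨fun i j _ hj hij ↦ ?_, fun i hi ↦ Bop_braid α B hybe (by omega)⟩
  rcases hij with hij | hji
  · exact Bop_comm_of_add_two_le α B hcomm hij (by omega)
  · exact (Bop_comm_of_add_two_le α B hcomm hji (by omega)).symm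

theorem stmt15 {k : Type*} [Field k] (M : ModuleCat k)
    (α : M ⟶ M) (B : M ⊗ M ⟶ M ⊗ M)
    -- B commutes with α ⊗ α
    (hcomm : B ≫ (α ⊗ₘ α) = (α ⊗ₘ α) ≫ B)
    -- the Hom-Yang-Baxter equation for (M, α)
    (hybe : ((α_ M M M).hom ≫ (α ⊗ₘ B) ≫ (α_ M M M).inv) ≫ (B ⊗ₘ α) ≫
        ((α_ M M M).hom ≫ (α ⊗ₘ B) ≫ (α_ M M M).inv)
      = (B ⊗ₘ α) ≫ ((α_ M M M).hom ≫ (α ⊗ₘ B) ≫ (α_ M M M).inv) ≫ (B ⊗ₘ α))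
    (n : ℕ) (hn : 3 ≤ n) :
    -- the operators B₁, ..., B_{n-1} (here 0-indexed: `Bop α B i (n-2)` for
    -- `i = 0, ..., n-2`) on `M^{⊗ n} = T M (n-1)` satisfy the braid relations
    (∀ i j : ℕ, i < n - 1 → j < n - 1 → (i + 1 < j ∨ j + 1 < i) →
      Bop α B i (n - 2) ≫ Bop α B j (n - 2)
        = Bop α B j (n - 2) ≫ Bop α B i (n - 2)) ∧
    (∀ i : ℕ, i + 1 < n - 1 →
      Bop α B i (n - 2) ≫ Bop α B (i + 1) (n - 2) ≫ Bop α B i (n - 2)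
        = Bop α B (i + 1) (n - 2) ≫ Bop α B i (n - 2) ≫ Bop α B (i + 1) (n - 2)) :=
  stmt15_general M α B hcomm hybe n
end

section
/- Let B be a solution of the Hom-Yang-Baxter equation for (V,α) with both α and B invertible, and let B₁ = B⊗α⊗α, B₂ = α⊗B⊗α, B₃ = α⊗α⊗B on V^{⊗4}. Set B' = B₂∘B₃∘B₁∘B₂ : (V⊗V)⊗(V⊗V) → (V⊗V)⊗(V⊗V) and α₂ = (α⊗α)⁴ : V⊗V → V⊗V. Then B' commutes with α₂⊗α₂, both α₂ and B' are invertible, and B' is a solution of the Hom-Yang-Baxter equation for (V⊗V, α₂): (α₂⊗B')∘(B'⊗α₂)∘(α₂⊗B') = (B'⊗α₂)∘(α₂⊗B')∘(B'⊗α₂). -/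
/-!
Write `W = V ⊗ V`, so that `W ⊗ W ⊗ W` is six copies of `V`, and let `c₁, …, c₅` be `B` acting on
strands `i, i + 1` and `α` on the other four. Adjacent `cᵢ` braid by the HYBE and distant ones
commute because `B` commutes with `α ⊗ α`; to see this, regroup the strands so that each `cᵢ`
becomes a plain tensor product and use the interchange law. Both sides of the HYBE for `(W, α₂, B')`
are words in the two cable crossings `X = c₂ ≫ c₁ ≫ c₃ ≫ c₂ = B' ⊗ α₂` and
`Y = c₄ ≫ c₃ ≫ c₅ ≫ c₄ = α₂ ⊗ B'`. Now `Y ≫ X = D ≫ E`, where `D = c₄ ≫ c₃ ≫ c₂ ≫ c₁` and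
`E = c₅ ≫ c₄ ≫ c₃ ≫ c₂` each carry one strand across the other four. Passing a strand across a
cable crossing shifts that crossing by one strand, so `X ≫ D = D ≫ X'` and `X' ≫ E = E ≫ Y`.
This gives `X ≫ Y ≫ X = X ≫ D ≫ E = D ≫ E ≫ Y = Y ≫ X ≫ Y`.
-/

open CategoryTheory MonoidalCategory

namespace CategoryTheory

section BraidWords

variable {C : Type*} [Category C] {X : C}

structure BraidRelations (x y z : X ⟶ X) : Prop where
  braid₁₂ : x ≫ y ≫ x = y ≫ x ≫ y
  braid₂₃ : y ≫ z ≫ y = z ≫ y ≫ z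
  comm₁₃ : x ≫ z = z ≫ x

theorem BraidRelations.conj {Y : C} {x y z : X ⟶ X} (h : BraidRelations x y z) (e : X ≅ Y) :
    BraidRelations (e.conj x) (e.conj y) (e.conj z) where
  braid₁₂ := by simp only [← Iso.conj_comp, h.braid₁₂]
  braid₂₃ := by simp only [← Iso.conj_comp, h.braid₂₃]
  comm₁₃ := by simp only [← Iso.conj_comp, h.comm₁₃]

theorem braid_of_intertwining_factorization {x y d e x' : X ⟶ X} (hyx : y ≫ x = d ≫ e)
    (hd : x ≫ d = d ≫ x') (he : x' ≫ e = e ≫ y) : y ≫ x ≫ y = x ≫ y ≫ x :=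
  calc y ≫ x ≫ y = d ≫ e ≫ y := by rw [← Category.assoc, hyx, Category.assoc]
    _ = x ≫ d ≫ e := by rw [← he, reassoc_of% hd]
    _ = x ≫ y ≫ x := by rw [hyx]

theorem cableCrossing_comp_of_intertwines {b₁ b₂ b₃ b₄ d : X ⟶ X} (h₁ : b₁ ≫ d = d ≫ b₂)
    (h₂ : b₂ ≫ d = d ≫ b₃) (h₃ : b₃ ≫ d = d ≫ b₄) :
    (b₂ ≫ b₁ ≫ b₃ ≫ b₂) ≫ d = d ≫ b₃ ≫ b₂ ≫ b₄ ≫ b₃ := by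
  simp only [Category.assoc, h₂, reassoc_of% h₁, reassoc_of% h₂, reassoc_of% h₃]

theorem cableCrossing_comp_strandPass {b₁ b₂ b₃ b₄ : X ⟶ X} (h : BraidRelations b₁ b₂ b₃)
    (r₃₄ : b₃ ≫ b₄ ≫ b₃ = b₄ ≫ b₃ ≫ b₄) (m₁₄ : b₁ ≫ b₄ = b₄ ≫ b₁) (m₂₄ : b₂ ≫ b₄ = b₄ ≫ b₂) :
    (b₂ ≫ b₁ ≫ b₃ ≫ b₂) ≫ (b₄ ≫ b₃ ≫ b₂ ≫ b₁) = (b₄ ≫ b₃ ≫ b₂ ≫ b₁) ≫ b₃ ≫ b₂ ≫ b₄ ≫ b₃ := by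
  apply cableCrossing_comp_of_intertwines <;> simp only [Category.assoc]
  · rw [reassoc_of% m₁₄, reassoc_of% h.comm₁₃, h.braid₁₂]
  · rw [reassoc_of% m₂₄, reassoc_of% h.braid₂₃, h.comm₁₃.symm]
  · rw [reassoc_of% r₃₄, reassoc_of% m₂₄.symm, m₁₄.symm]

theorem BraidRelations.cable_braid {c₁ c₂ c₃ c₄ c₅ : X ⟶ X} (h₁₂₃ : BraidRelations c₁ c₂ c₃)
    (h₃₄₅ : BraidRelations c₃ c₄ c₅) (m₁₄ : c₁ ≫ c₄ = c₄ ≫ c₁) (m₁₅ : c₁ ≫ c₅ = c₅ ≫ c₁)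
    (m₂₄ : c₂ ≫ c₄ = c₄ ≫ c₂) (m₂₅ : c₂ ≫ c₅ = c₅ ≫ c₂) :
    (c₄ ≫ c₃ ≫ c₅ ≫ c₄) ≫ (c₂ ≫ c₁ ≫ c₃ ≫ c₂) ≫ (c₄ ≫ c₃ ≫ c₅ ≫ c₄) =
      (c₂ ≫ c₁ ≫ c₃ ≫ c₂) ≫ (c₄ ≫ c₃ ≫ c₅ ≫ c₄) ≫ (c₂ ≫ c₁ ≫ c₃ ≫ c₂) := by
  refine braid_of_intertwining_factorization
    (d := c₄ ≫ c₃ ≫ c₂ ≫ c₁) (e := c₅ ≫ c₄ ≫ c₃ ≫ c₂) ?_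
    (cableCrossing_comp_strandPass h₁₂₃ h₃₄₅.braid₁₂ m₁₄ m₂₄)
    (cableCrossing_comp_strandPass ⟨h₁₂₃.braid₂₃, h₃₄₅.braid₁₂, m₂₄⟩ h₃₄₅.braid₂₃ m₂₅
      h₃₄₅.comm₁₃)
  simp only [Category.assoc]
  rw [← reassoc_of% m₂₄, ← reassoc_of% m₂₅, ← reassoc_of% m₁₄, ← reassoc_of% m₁₅]

end BraidWords

section Monoidal

variable {C : Type*} [Category C] [MonoidalCategory C]

theorem BraidRelations.tensorHom_right {X : C} {x y z : X ⟶ X} (h : BraidRelations x y z)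
    {Y : C} (a : Y ⟶ Y) : BraidRelations (x ⊗ₘ a) (y ⊗ₘ a) (z ⊗ₘ a) where
  braid₁₂ := by simp only [tensorHom_comp_tensorHom, h.braid₁₂]
  braid₂₃ := by simp only [tensorHom_comp_tensorHom, h.braid₂₃]
  comm₁₃ := by simp only [tensorHom_comp_tensorHom, h.comm₁₃]

theorem BraidRelations.tensorHom_left {X : C} {x y z : X ⟶ X} (h : BraidRelations x y z)
    {Y : C} (a : Y ⟶ Y) : BraidRelations (a ⊗ₘ x) (a ⊗ₘ y) (a ⊗ₘ z) where
  braid₁₂ := by simp only [tensorHom_comp_tensorHom, h.braid₁₂]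
  braid₂₃ := by simp only [tensorHom_comp_tensorHom, h.braid₂₃]
  comm₁₃ := by simp only [tensorHom_comp_tensorHom, h.comm₁₃]

theorem Iso.conj_tensorHom_comm {X Y Z : C} (e : X ⊗ Y ≅ Z) {x a : X ⟶ X} {y b : Y ⟶ Y}
    (hx : x ≫ a = a ≫ x) (hy : y ≫ b = b ≫ y) :
    e.conj (x ⊗ₘ b) ≫ e.conj (a ⊗ₘ y) = e.conj (a ⊗ₘ y) ≫ e.conj (x ⊗ₘ b) := by
  simp only [← Iso.conj_comp, tensorHom_comp_tensorHom, hx, hy]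

abbrev coherenceConj {X Y : C} [MonoidalCoherence X Y] (f : X ⟶ X) : Y ⟶ Y :=
  (monoidalIso X Y).conj f

end Monoidal

end CategoryTheory

namespace HomYangBaxter

variable {C : Type*} [Category C] [MonoidalCategory C] {V : C}

structure IsSolution (α : V ⟶ V) (B : V ⊗ V ⟶ V ⊗ V) : Prop where
  comm : B ≫ (α ⊗ₘ α) = (α ⊗ₘ α) ≫ B
  braid : (α_ V V V).symm.conj (α ⊗ₘ B) ≫ (B ⊗ₘ α) ≫ (α_ V V V).symm.conj (α ⊗ₘ B) =
    (B ⊗ₘ α) ≫ (α_ V V V).symm.conj (α ⊗ₘ B) ≫ (B ⊗ₘ α)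

section Transport

variable (α : V ⟶ V) (B : V ⊗ V ⟶ V ⊗ V)

def gen₁ : (V ⊗ V) ⊗ (V ⊗ V) ⟶ (V ⊗ V) ⊗ (V ⊗ V) := B ⊗ₘ (α ⊗ₘ α)

def gen₂ : (V ⊗ V) ⊗ (V ⊗ V) ⟶ (V ⊗ V) ⊗ (V ⊗ V) :=
  (α_ (V ⊗ V) V V).inv ≫ ((α_ V V V).hom ⊗ₘ 𝟙 V) ≫ ((α ⊗ₘ B) ⊗ₘ α) ≫
    ((α_ V V V).inv ⊗ₘ 𝟙 V) ≫ (α_ (V ⊗ V) V V).hom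

def gen₃ : (V ⊗ V) ⊗ (V ⊗ V) ⟶ (V ⊗ V) ⊗ (V ⊗ V) := (α ⊗ₘ α) ⊗ₘ B

theorem gen₁_eq_conj : gen₁ α B = coherenceConj ((B ⊗ₘ α) ⊗ₘ α) := by
  simp only [gen₁, coherenceConj, Iso.conj_apply]; monoidal

theorem gen₂_eq_conj_left :
    gen₂ α B = coherenceConj ((α_ V V V).symm.conj (α ⊗ₘ B) ⊗ₘ α) := by
  simp only [gen₂, coherenceConj, Iso.conj_apply, Iso.symm_hom, Iso.symm_inv]; monoidal

theorem gen₂_eq_conj_right : gen₂ α B = coherenceConj (α ⊗ₘ (B ⊗ₘ α)) := by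
  simp only [gen₂, coherenceConj, Iso.conj_apply]; monoidal

theorem gen₃_eq_conj : gen₃ α B = coherenceConj (α ⊗ₘ (α_ V V V).symm.conj (α ⊗ₘ B)) := by
  simp only [gen₃, coherenceConj, Iso.conj_apply, Iso.symm_hom, Iso.symm_inv]; monoidal

theorem tensorHom_self_eq_conj :
    ((α ⊗ₘ α) ⊗ₘ (α ⊗ₘ α) : (V ⊗ V) ⊗ (V ⊗ V) ⟶ (V ⊗ V) ⊗ (V ⊗ V)) =
      coherenceConj (α ⊗ₘ ((α ⊗ₘ α) ⊗ₘ α)) := by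
  simp only [coherenceConj, Iso.conj_apply]; monoidal

theorem gen₁_tensorHom_eq_conj :
    gen₁ α B ⊗ₘ (α ⊗ₘ α) = coherenceConj ((B ⊗ₘ α) ⊗ₘ ((α ⊗ₘ α) ⊗ₘ α)) := by
  simp only [gen₁, coherenceConj, Iso.conj_apply]; monoidal

theorem gen₂_tensorHom_eq_conj : gen₂ α B ⊗ₘ (α ⊗ₘ α) =
    coherenceConj ((α_ V V V).symm.conj (α ⊗ₘ B) ⊗ₘ ((α ⊗ₘ α) ⊗ₘ α)) := by
  simp only [gen₂, coherenceConj, Iso.conj_apply, Iso.symm_hom, Iso.symm_inv]; monoidal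

theorem conj_tensorHom_gen₁ :
    (α_ (V ⊗ V) (V ⊗ V) (V ⊗ V)).symm.conj ((α ⊗ₘ α) ⊗ₘ gen₁ α B) = gen₃ α B ⊗ₘ (α ⊗ₘ α) := by
  simp only [gen₁, gen₃, Iso.conj_apply, Iso.symm_hom, Iso.symm_inv]; monoidal

theorem conj_tensorHom_gen₂ :
    (α_ (V ⊗ V) (V ⊗ V) (V ⊗ V)).symm.conj ((α ⊗ₘ α) ⊗ₘ gen₂ α B) =
      coherenceConj (((α ⊗ₘ α) ⊗ₘ α) ⊗ₘ (B ⊗ₘ α)) := by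
  simp only [gen₂, coherenceConj, Iso.conj_apply, Iso.symm_hom, Iso.symm_inv]; monoidal

theorem conj_tensorHom_gen₃ :
    (α_ (V ⊗ V) (V ⊗ V) (V ⊗ V)).symm.conj ((α ⊗ₘ α) ⊗ₘ gen₃ α B) =
      coherenceConj (((α ⊗ₘ α) ⊗ₘ α) ⊗ₘ (α_ V V V).symm.conj (α ⊗ₘ B)) := by
  simp only [gen₃, coherenceConj, Iso.conj_apply, Iso.symm_hom, Iso.symm_inv]; monoidal

end Transport

variable {α : V ⟶ V} {B : V ⊗ V ⟶ V ⊗ V}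

theorem IsSolution.comm₁₂ (h : IsSolution α B) :
    (B ⊗ₘ α) ≫ ((α ⊗ₘ α) ⊗ₘ α) = ((α ⊗ₘ α) ⊗ₘ α) ≫ (B ⊗ₘ α) := by
  simp only [tensorHom_comp_tensorHom, h.comm]

theorem IsSolution.comm₂₃ (h : IsSolution α B) :
    (α_ V V V).symm.conj (α ⊗ₘ B) ≫ ((α ⊗ₘ α) ⊗ₘ α) =
      ((α ⊗ₘ α) ⊗ₘ α) ≫ (α_ V V V).symm.conj (α ⊗ₘ B) := by
  have hα : (α ⊗ₘ α) ⊗ₘ α = (α_ V V V).symm.conj (α ⊗ₘ (α ⊗ₘ α)) := by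
    rw [Iso.conj_apply, Iso.symm_hom, Iso.symm_inv, associator_inv_naturality,
      Iso.hom_inv_id_assoc]
  rw [hα]
  simp only [← Iso.conj_comp, tensorHom_comp_tensorHom, h.comm]

theorem IsSolution.braidRelations (h : IsSolution α B) :
    BraidRelations (gen₁ α B) (gen₂ α B) (gen₃ α B) where
  braid₁₂ := by
    simp only [gen₁_eq_conj, gen₂_eq_conj_left, ← Iso.conj_comp, tensorHom_comp_tensorHom,
      h.braid]
  braid₂₃ := by
    simp only [gen₂_eq_conj_right, gen₃_eq_conj, ← Iso.conj_comp, tensorHom_comp_tensorHom,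
      h.braid]
  comm₁₃ := by simp only [gen₁, gen₃, tensorHom_comp_tensorHom, h.comm]

theorem IsSolution.gen₁_comm (h : IsSolution α B) :
    gen₁ α B ≫ ((α ⊗ₘ α) ⊗ₘ (α ⊗ₘ α)) = ((α ⊗ₘ α) ⊗ₘ (α ⊗ₘ α)) ≫ gen₁ α B := by
  simp only [gen₁, tensorHom_comp_tensorHom, h.comm]

theorem IsSolution.gen₂_comm (h : IsSolution α B) :
    gen₂ α B ≫ ((α ⊗ₘ α) ⊗ₘ (α ⊗ₘ α)) = ((α ⊗ₘ α) ⊗ₘ (α ⊗ₘ α)) ≫ gen₂ α B := by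
  simp only [gen₂_eq_conj_right, tensorHom_self_eq_conj, ← Iso.conj_comp,
    tensorHom_comp_tensorHom, h.comm₁₂]

theorem IsSolution.gen₃_comm (h : IsSolution α B) :
    gen₃ α B ≫ ((α ⊗ₘ α) ⊗ₘ (α ⊗ₘ α)) = ((α ⊗ₘ α) ⊗ₘ (α ⊗ₘ α)) ≫ gen₃ α B := by
  simp only [gen₃, tensorHom_comp_tensorHom, h.comm]

theorem IsSolution.tensorSquare (h : IsSolution α B) :
    IsSolution ((α ⊗ₘ α) ≫ (α ⊗ₘ α) ≫ (α ⊗ₘ α) ≫ (α ⊗ₘ α))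
      (gen₂ α B ≫ gen₁ α B ≫ gen₃ α B ≫ gen₂ α B) where
  comm := by
    simp only [← tensorHom_comp_tensorHom, Category.assoc, h.gen₂_comm, reassoc_of% h.gen₁_comm,
      reassoc_of% h.gen₂_comm, reassoc_of% h.gen₃_comm]
  braid := by
    have left := h.braidRelations.tensorHom_right (α ⊗ₘ α)
    have right :=
      (h.braidRelations.tensorHom_left (α ⊗ₘ α)).conj (α_ (V ⊗ V) (V ⊗ V) (V ⊗ V)).symm
    rw [conj_tensorHom_gen₁] at right
    simp only [← tensorHom_comp_tensorHom, Iso.conj_comp]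
    rw [conj_tensorHom_gen₁]
    refine left.cable_braid right ?_ ?_ ?_ ?_ <;>
      simp only [gen₁_tensorHom_eq_conj, gen₂_tensorHom_eq_conj, conj_tensorHom_gen₂,
        conj_tensorHom_gen₃]
    · exact Iso.conj_tensorHom_comm _ h.comm₁₂ h.comm₁₂
    · exact Iso.conj_tensorHom_comm _ h.comm₁₂ h.comm₂₃
    · exact Iso.conj_tensorHom_comm _ h.comm₂₃ h.comm₁₂
    · exact Iso.conj_tensorHom_comm _ h.comm₂₃ h.comm₂₃

end HomYangBaxter

theorem stmt16 {k : Type*} [Field k] (M : ModuleCat k)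
    (α : M ⟶ M) (B : M ⊗ M ⟶ M ⊗ M)
    -- B commutes with α ⊗ α
    (hcomm : B ≫ (α ⊗ₘ α) = (α ⊗ₘ α) ≫ B)
    -- the Hom-Yang-Baxter equation for (M, α)
    (hybe : ((α_ M M M).hom ≫ (α ⊗ₘ B) ≫ (α_ M M M).inv) ≫ (B ⊗ₘ α) ≫
        ((α_ M M M).hom ≫ (α ⊗ₘ B) ≫ (α_ M M M).inv)
      = (B ⊗ₘ α) ≫ ((α_ M M M).hom ≫ (α ⊗ₘ B) ≫ (α_ M M M).inv) ≫ (B ⊗ₘ α))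
    (hαinv : IsIso α) (hBinv : IsIso B) :
    -- B₁ = B ⊗ α ⊗ α, B₃ = α ⊗ α ⊗ B, and B₂ = α ⊗ B ⊗ α (via reassociation)
    ∀ B1 B2 B3 : (M ⊗ M) ⊗ (M ⊗ M) ⟶ (M ⊗ M) ⊗ (M ⊗ M),
      B1 = B ⊗ₘ (α ⊗ₘ α) →
      B2 = (α_ (M ⊗ M) M M).inv ≫ ((α_ M M M).hom ⊗ₘ 𝟙 M) ≫ ((α ⊗ₘ B) ⊗ₘ α) ≫
            ((α_ M M M).inv ⊗ₘ 𝟙 M) ≫ (α_ (M ⊗ M) M M).hom →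
      B3 = (α ⊗ₘ α) ⊗ₘ B →
      ∀ B' : (M ⊗ M) ⊗ (M ⊗ M) ⟶ (M ⊗ M) ⊗ (M ⊗ M),
        -- B' = B₂ ∘ B₃ ∘ B₁ ∘ B₂  (rightmost applied first)
        B' = B2 ≫ B1 ≫ B3 ≫ B2 →
        ∀ α₂ : M ⊗ M ⟶ M ⊗ M,
          -- α₂ = (α ⊗ α)⁴
          α₂ = (α ⊗ₘ α) ≫ (α ⊗ₘ α) ≫ (α ⊗ₘ α) ≫ (α ⊗ₘ α) →
          -- B' commutes with α₂ ⊗ α₂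
          (B' ≫ (α₂ ⊗ₘ α₂) = (α₂ ⊗ₘ α₂) ≫ B') ∧
          -- both α₂ and B' are invertible
          IsIso α₂ ∧ IsIso B' ∧
          -- B' is a solution of the HYBE for (M ⊗ M, α₂)
          (((α_ (M ⊗ M) (M ⊗ M) (M ⊗ M)).hom ≫ (α₂ ⊗ₘ B') ≫
              (α_ (M ⊗ M) (M ⊗ M) (M ⊗ M)).inv) ≫ (B' ⊗ₘ α₂) ≫
            ((α_ (M ⊗ M) (M ⊗ M) (M ⊗ M)).hom ≫ (α₂ ⊗ₘ B') ≫
              (α_ (M ⊗ M) (M ⊗ M) (M ⊗ M)).inv)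
            = (B' ⊗ₘ α₂) ≫
              ((α_ (M ⊗ M) (M ⊗ M) (M ⊗ M)).hom ≫ (α₂ ⊗ₘ B') ≫
                (α_ (M ⊗ M) (M ⊗ M) (M ⊗ M)).inv) ≫ (B' ⊗ₘ α₂)) := by
  rintro _ _ _ rfl rfl rfl _ rfl _ rfl
  have h := (HomYangBaxter.IsSolution.mk hcomm hybe).tensorSquare
  exact ⟨h.comm, inferInstance, inferInstance, h.braid⟩
end

section
/- Let L = (L,[−,−],α) be a Hom-Lie algebra with α invertible, set L' = C ⊕ L with α(a,x) = (a,α(x)), and define B_α((a,x)⊗(b,y)) = (b,α(y))⊗(a,α(x)) + (1,0)⊗(0,[x,y]). Then B_α is invertible with inverse B_α⁻¹((a,x)⊗(b,y)) = (b,α⁻¹(y))⊗(a,α⁻¹(x)) + (0,α⁻²([x,y]))⊗(1,0). -/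
open TensorProduct

/-- The operator `B_α` on `(ℂ × L) ⊗ (ℂ × L)` given by
`B_α ((a,x) ⊗ (b,y)) = (b, α y) ⊗ (a, α x) + (1,0) ⊗ (0, [x,y])`. -/
noncomputable def homLieB {L : Type*} [AddCommGroup L] [Module ℂ L]
    (br : L →ₗ[ℂ] L →ₗ[ℂ] L) (α : L →ₗ[ℂ] L) :
    ((ℂ × L) ⊗[ℂ] (ℂ × L)) →ₗ[ℂ] ((ℂ × L) ⊗[ℂ] (ℂ × L)) :=
  (TensorProduct.comm ℂ (ℂ × L) (ℂ × L)).toLinearMap ∘ₗ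
      TensorProduct.map ((LinearMap.id : ℂ →ₗ[ℂ] ℂ).prodMap α)
        ((LinearMap.id : ℂ →ₗ[ℂ] ℂ).prodMap α) +
    (TensorProduct.mk ℂ (ℂ × L) (ℂ × L) (1, 0)) ∘ₗ
      (LinearMap.inr ℂ ℂ L) ∘ₗ (TensorProduct.lift br) ∘ₗ
      TensorProduct.map (LinearMap.snd ℂ ℂ L) (LinearMap.snd ℂ ℂ L)

/-- The candidate inverse:
`(a,x) ⊗ (b,y) ↦ (b, α⁻¹ y) ⊗ (a, α⁻¹ x) + (0, α⁻²[x,y]) ⊗ (1,0)`. -/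
noncomputable def homLieBinv {L : Type*} [AddCommGroup L] [Module ℂ L]
    (br : L →ₗ[ℂ] L →ₗ[ℂ] L) (αinv : L →ₗ[ℂ] L) :
    ((ℂ × L) ⊗[ℂ] (ℂ × L)) →ₗ[ℂ] ((ℂ × L) ⊗[ℂ] (ℂ × L)) :=
  (TensorProduct.comm ℂ (ℂ × L) (ℂ × L)).toLinearMap ∘ₗ
      TensorProduct.map ((LinearMap.id : ℂ →ₗ[ℂ] ℂ).prodMap αinv)
        ((LinearMap.id : ℂ →ₗ[ℂ] ℂ).prodMap αinv) +
    ((TensorProduct.mk ℂ (ℂ × L) (ℂ × L)).flip (1, 0)) ∘ₗ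
      (LinearMap.inr ℂ ℂ L) ∘ₗ αinv ∘ₗ αinv ∘ₗ (TensorProduct.lift br) ∘ₗ
      TensorProduct.map (LinearMap.snd ℂ ℂ L) (LinearMap.snd ℂ ℂ L)

/-!
On pure tensors both composites return the input plus two correction terms, `(1,0) ⊗ (0, ±α⁻¹[x,y])`
for `B_α ∘ B_α⁻¹` and `(0, ±α⁻¹[x,y]) ⊗ (1,0)` for `B_α⁻¹ ∘ B_α`. They cancel by skew-symmetry,
because `α⁻¹` is multiplicative along with `α`.
-/

section

variable {L : Type*} [AddCommGroup L] [Module ℂ L] (br : L →ₗ[ℂ] L →ₗ[ℂ] L) {α αinv : L →ₗ[ℂ] L}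

theorem homLieB_tmul (α : L →ₗ[ℂ] L) (a b : ℂ) (x y : L) :
    homLieB br α ((a, x) ⊗ₜ (b, y)) =
      (b, α y) ⊗ₜ (a, α x) + ((1 : ℂ), (0 : L)) ⊗ₜ ((0 : ℂ), br x y) := by
  simp [homLieB]

theorem homLieBinv_tmul (αinv : L →ₗ[ℂ] L) (a b : ℂ) (x y : L) :
    homLieBinv br αinv ((a, x) ⊗ₜ (b, y)) =
      (b, αinv y) ⊗ₜ (a, αinv x) + ((0 : ℂ), αinv (αinv (br x y))) ⊗ₜ ((1 : ℂ), (0 : L)) := by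
  simp [homLieBinv]

theorem map_br_of_leftInverse_of_rightInverse (hmult : ∀ x y, α (br x y) = br (α x) (α y))
    (hleft : Function.LeftInverse αinv α) (hright : Function.RightInverse αinv α) (x y : L) :
    αinv (br x y) = br (αinv x) (αinv y) := by
  conv_lhs => rw [← hright x, ← hright y, ← hmult, hleft]

theorem homLieBinv_homLieB_tmul (hskew : ∀ x y, br x y = -br y x)
    (hmult : ∀ x y, α (br x y) = br (α x) (α y)) (hleft : Function.LeftInverse αinv α)
    (p q : ℂ × L) : homLieBinv br αinv (homLieB br α (p ⊗ₜ q)) = p ⊗ₜ q := by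
  obtain ⟨a, x⟩ := p
  obtain ⟨b, y⟩ := q
  have hswap : αinv (αinv (br (α y) (α x))) = -αinv (br x y) := by
    rw [← hmult, hleft, hskew, map_neg]
  rw [homLieB_tmul, map_add, homLieBinv_tmul, homLieBinv_tmul, hleft, hleft, hswap]
  simp only [map_zero, LinearMap.zero_apply]
  rw [Prod.mk_zero_zero, zero_tmul, add_zero, add_assoc, ← add_tmul, Prod.mk_add_mk,
    neg_add_cancel, add_zero, Prod.mk_zero_zero, zero_tmul, add_zero]

theorem homLieB_homLieBinv_tmul (hskew : ∀ x y, br x y = -br y x)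
    (hmult : ∀ x y, α (br x y) = br (α x) (α y)) (hleft : Function.LeftInverse αinv α)
    (hright : Function.RightInverse αinv α) (p q : ℂ × L) :
    homLieB br α (homLieBinv br αinv (p ⊗ₜ q)) = p ⊗ₜ q := by
  obtain ⟨a, x⟩ := p
  obtain ⟨b, y⟩ := q
  have hswap : br (αinv y) (αinv x) = -αinv (br x y) := by
    rw [← map_br_of_leftInverse_of_rightInverse br hmult hleft hright, hskew, map_neg]
  rw [homLieBinv_tmul, map_add, homLieB_tmul, homLieB_tmul, hright, hright, hright, hswap]
  simp only [map_zero]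
  rw [Prod.mk_zero_zero, tmul_zero, add_zero, add_assoc, ← tmul_add, Prod.mk_add_mk,
    neg_add_cancel, add_zero, Prod.mk_zero_zero, tmul_zero, add_zero]

end

theorem stmt18_general {L : Type*} [AddCommGroup L] [Module ℂ L]
    (br : L →ₗ[ℂ] L →ₗ[ℂ] L) (α αinv : L →ₗ[ℂ] L)
    (hskew : ∀ x y : L, br x y = - br y x)
    (hmult : ∀ x y : L, α (br x y) = br (α x) (α y))
    (hinv1 : αinv ∘ₗ α = LinearMap.id) (hinv2 : α ∘ₗ αinv = LinearMap.id) :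
    homLieB br α ∘ₗ homLieBinv br αinv = LinearMap.id ∧
    homLieBinv br αinv ∘ₗ homLieB br α = LinearMap.id := by
  have hleft : Function.LeftInverse αinv α := LinearMap.congr_fun hinv1
  have hright : Function.RightInverse αinv α := LinearMap.congr_fun hinv2
  constructor <;> refine TensorProduct.ext' fun p q => ?_
  · exact homLieB_homLieBinv_tmul br hskew hmult hleft hright p q
  · exact homLieBinv_homLieB_tmul br hskew hmult hleft p q

theorem stmt18 {L : Type*} [AddCommGroup L] [Module ℂ L]
    (br : L →ₗ[ℂ] L →ₗ[ℂ] L) (α αinv : L →ₗ[ℂ] L)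
    (hskew : ∀ x y : L, br x y = - br y x)
    (hmult : ∀ x y : L, α (br x y) = br (α x) (α y))
    (hjac : ∀ x y z : L,
      br (br x y) (α z) + br (br z x) (α y) + br (br y z) (α x) = 0)
    (hinv1 : αinv ∘ₗ α = LinearMap.id) (hinv2 : α ∘ₗ αinv = LinearMap.id) :
    homLieB br α ∘ₗ homLieBinv br αinv = LinearMap.id ∧
    homLieBinv br αinv ∘ₗ homLieB br α = LinearMap.id :=
  stmt18_general br α αinv hskew hmult hinv1 hinv2
end
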